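/- arXiv:2104.01331 — 2 statements merged into one kernel-verified Lean document; each statement's English description precedes it below -/
import Mathlib

section
/- With the notation of the least squares Universum model with C_u = μ: fix ẑ ∈ R^d and define ĉ = (e^T D_1 e − e^T A^T ẑ − ε e^T D_2 e − e^T U^T ẑ)/(m + 2r), ξ̂ = e − D_1 A^T ẑ − D_1 e ĉ, ψ̂ = −εe − D_2 U^T ẑ − D_2 e ĉ, and let (c̃, ξ̃, ψ̃) be as in the z = 0 case (c̃ = (e^T D_1 e − ε e^T D_2 e)/(m + 2r), ξ̃ = e − D_1 e c̃, ψ̃ = −εe − D_2 e c̃). If ||ξ̃||_2^2 + ||ψ̃||_2^2 > ||ξ̂||_2^2 + ||ψ̂||_2^2 and μ > ((1/2) ẑ^T G ẑ + λ||Vẑ||_1)/(||ξ̃||_2^2 + ||ψ̃||_2^2 − ||ξ̂||_2^2 − ||ψ̂||_2^2), then any optimal solution (z*, c*) of min_{z,c} (1/2) z^T G z + λ||Vz||_1 + μ||e − D_1(A^T z + ce)||_2^2 + μ||εe + D_2(U^T z + ce)||_2^2 satisfies z* ≠ 0. -/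
open Matrix BigOperators

/-- With `C_u = μ`: if the candidate `ẑ` yields `‖ξ̂‖² + ‖ψ̂‖² < ‖ξ̃‖² + ‖ψ̃‖²` and
`μ > ((1/2)ẑᵀGẑ + λ‖Vẑ‖₁)/(‖ξ̃‖² + ‖ψ̃‖² − ‖ξ̂‖² − ‖ψ̂‖²)`, then every optimal solution
of the least-squares model has `z* ≠ 0`. -/
theorem ls_model_nonzero_z_of_large_mu (d k m r : ℕ) (hm : 1 ≤ m) (hr : 1 ≤ r)
    (G : Matrix (Fin d) (Fin d) ℝ) (hG : G.PosSemidef)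
    (V : Matrix (Fin k) (Fin d) ℝ)
    (A : Matrix (Fin d) (Fin m) ℝ) (U : Matrix (Fin d) (Fin (2 * r)) ℝ)
    (y : Fin m → ℝ) (hy : ∀ i, y i = 1 ∨ y i = -1)
    (yu : Fin (2 * r) → ℝ)
    (hyu1 : ∀ j : Fin (2 * r), (j : ℕ) < r → yu j = 1)
    (hyu2 : ∀ j : Fin (2 * r), r ≤ (j : ℕ) → yu j = -1)
    (lam mu eps : ℝ) (hlam : 0 < lam) (hmu : 0 < mu) (heps : 0 ≤ eps)
    (zh : Fin d → ℝ) :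
    let F : (Fin d → ℝ) → ℝ → ℝ := fun z c =>
      (1/2) * (z ⬝ᵥ G.mulVec z) + lam * ∑ i, |V.mulVec z i|
        + mu * ∑ i, (1 - y i * (Aᵀ.mulVec z i + c)) ^ 2
        + mu * ∑ j, (eps + yu j * (Uᵀ.mulVec z j + c)) ^ 2
    let ch : ℝ := (∑ i, y i - ∑ i, Aᵀ.mulVec zh i - eps * ∑ j, yu j - ∑ j, Uᵀ.mulVec zh j)
        / (m + 2 * r)
    let xih : Fin m → ℝ := fun i => 1 - y i * (Aᵀ.mulVec zh i + ch)
    let psih : Fin (2 * r) → ℝ := fun j => -eps - yu j * (Uᵀ.mulVec zh j + ch)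
    let ct : ℝ := (∑ i, y i - eps * ∑ j, yu j) / (m + 2 * r)
    let xit : Fin m → ℝ := fun i => 1 - y i * ct
    let psit : Fin (2 * r) → ℝ := fun j => -eps - yu j * ct
    ∑ i, (xit i) ^ 2 + ∑ j, (psit j) ^ 2 > ∑ i, (xih i) ^ 2 + ∑ j, (psih j) ^ 2 →
    mu > ((1/2) * (zh ⬝ᵥ G.mulVec zh) + lam * ∑ i, |V.mulVec zh i|) /
        (∑ i, (xit i) ^ 2 + ∑ j, (psit j) ^ 2 - ∑ i, (xih i) ^ 2 - ∑ j, (psih j) ^ 2) →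
    ∀ zs cs, (∀ z c, F zs cs ≤ F z c) → zs ≠ 0 := by
  intro F ch xih psih ct xit psit hgt hmu' zs cs hopt h0
  subst h0
  have hy2 : ∀ i, (y i) ^ 2 = 1 := fun i => by rcases hy i with h | h <;> rw [h] <;> norm_num
  have hyusq : ∀ j, (yu j) ^ 2 = 1 := fun j => by
    rcases lt_or_ge (j : ℕ) r with h | h
    · rw [hyu1 j h]; norm_num
    · rw [hyu2 j h]; norm_num
  have hn : (0 : ℝ) < (m : ℝ) + 2 * r := by
    have h1 : (1:ℝ) ≤ (m:ℝ) := by exact_mod_cast hm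
    have h2 : (0:ℝ) ≤ (r:ℝ) := by positivity
    linarith
  -- expansion of the z = 0 objective sums as a quadratic in c
  have expand : ∀ c : ℝ,
      ∑ i, (1 - y i * c) ^ 2 + ∑ j, (eps + yu j * c) ^ 2
        = ((m : ℝ) + 2 * r) * c ^ 2 - 2 * (∑ i, y i - eps * ∑ j, yu j) * c
            + ((m : ℝ) + eps ^ 2 * (2 * r)) := by
    intro c
    have e1 : ∑ i, (1 - y i * c) ^ 2 = ∑ i, ((c ^ 2 + 1) - 2 * c * y i) :=
      Finset.sum_congr rfl fun i _ => by linear_combination c ^ 2 * hy2 i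
    have e2 : ∑ j, (eps + yu j * c) ^ 2 = ∑ j, ((c ^ 2 + eps ^ 2) + 2 * eps * c * yu j) :=
      Finset.sum_congr rfl fun j _ => by linear_combination c ^ 2 * hyusq j
    rw [e1, e2]
    simp only [Finset.sum_sub_distrib, Finset.sum_add_distrib, Finset.sum_const,
      Finset.card_univ, Fintype.card_fin, nsmul_eq_mul, ← Finset.mul_sum]
    push_cast
    ring
  have hct : ((m : ℝ) + 2 * r) * ct = ∑ i, y i - eps * ∑ j, yu j := by
    show ((m : ℝ) + 2 * r) * ((∑ i, y i - eps * ∑ j, yu j) / (m + 2 * r)) = _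
    field_simp
  -- ct minimizes the z = 0 objective
  have key : ∀ c : ℝ,
      ∑ i, (xit i) ^ 2 + ∑ j, (psit j) ^ 2
        ≤ ∑ i, (1 - y i * c) ^ 2 + ∑ j, (eps + yu j * c) ^ 2 := by
    intro c
    have h2 : ∑ j, (psit j) ^ 2 = ∑ j, (eps + yu j * ct) ^ 2 :=
      Finset.sum_congr rfl fun j _ => by show (-eps - yu j * ct) ^ 2 = _; ring
    have ht : ∑ i, (xit i) ^ 2 + ∑ j, (psit j) ^ 2
        = ∑ i, (1 - y i * ct) ^ 2 + ∑ j, (eps + yu j * ct) ^ 2 := by rw [h2]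
    rw [ht, expand c, expand ct]
    clear_value xit psit ct
    have hfact : ((m : ℝ) + 2 * r) * c ^ 2 - 2 * (∑ i, y i - eps * ∑ j, yu j) * c
          + ((m : ℝ) + eps ^ 2 * (2 * r))
        - (((m : ℝ) + 2 * r) * ct ^ 2 - 2 * (∑ i, y i - eps * ∑ j, yu j) * ct
          + ((m : ℝ) + eps ^ 2 * (2 * r)))
        = ((m : ℝ) + 2 * r) * (c - ct) ^ 2 := by
      linear_combination (2 * c - 2 * ct) * hct
    linarith [hfact, mul_nonneg hn.le (sq_nonneg (c - ct))]
  -- value of the objective at the candidate (zh, ch)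
  have hFh : F zh ch = (1/2) * (zh ⬝ᵥ G.mulVec zh) + lam * ∑ i, |V.mulVec zh i|
      + mu * (∑ i, (xih i) ^ 2 + ∑ j, (psih j) ^ 2) := by
    show _ = _
    have : ∑ j, (eps + yu j * (Uᵀ.mulVec zh j + ch)) ^ 2 = ∑ j, (psih j) ^ 2 :=
      Finset.sum_congr rfl fun j _ => by show _ = (-eps - yu j * (Uᵀ.mulVec zh j + ch)) ^ 2; ring
    rw [show F zh ch = (1/2) * (zh ⬝ᵥ G.mulVec zh) + lam * ∑ i, |V.mulVec zh i|
        + mu * ∑ i, (1 - y i * (Aᵀ.mulVec zh i + ch)) ^ 2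
        + mu * ∑ j, (eps + yu j * (Uᵀ.mulVec zh j + ch)) ^ 2 from rfl, this]
    ring
  -- value of the objective at (0, cs)
  have hF0 : F 0 cs = mu * (∑ i, (1 - y i * cs) ^ 2 + ∑ j, (eps + yu j * cs) ^ 2) := by
    rw [show F 0 cs = (1/2) * ((0 : Fin d → ℝ) ⬝ᵥ G.mulVec 0) + lam * ∑ i, |V.mulVec 0 i|
        + mu * ∑ i, (1 - y i * (Aᵀ.mulVec 0 i + cs)) ^ 2
        + mu * ∑ j, (eps + yu j * (Uᵀ.mulVec 0 j + cs)) ^ 2 from rfl]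
    simp [Matrix.mulVec_zero]
    ring
  have hΔ : 0 < ∑ i, (xit i) ^ 2 + ∑ j, (psit j) ^ 2
      - ∑ i, (xih i) ^ 2 - ∑ j, (psih j) ^ 2 := by linarith [hgt]
  have hQ : (1/2) * (zh ⬝ᵥ G.mulVec zh) + lam * ∑ i, |V.mulVec zh i|
      < mu * (∑ i, (xit i) ^ 2 + ∑ j, (psit j) ^ 2
          - ∑ i, (xih i) ^ 2 - ∑ j, (psih j) ^ 2) := (div_lt_iff₀ hΔ).mp hmu'
  have h1 : F 0 cs ≤ F zh ch := hopt zh ch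
  rw [hF0, hFh] at h1
  nlinarith [key cs, mul_le_mul_of_nonneg_left (key cs) hmu.le, hQ, h1]
end

section
/- Suppose the data set is quadratically separable, i.e., there exists (z̄, c̄) with y_i(z̄^T r_i + c̄) ≥ 1 for all i = 1,...,m. Then for every λ > 0 there exists μ̄ > 0 such that for all μ > μ̄, every optimal solution (z*, c*, ξ*, ψ*) of the convex program min (1/2)z^T G z + λ||Vz||_1 + μ∑_i ξ_i + C_u ∑_j ψ_j subject to y_i(z^T r_i + c) ≥ 1 − ξ_i, y_j(z^T r_j + c) ≥ −ε − ψ_j, ξ ≥ 0, ψ ≥ 0, has ξ* = 0. -/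
/-!
Scaling a separating pair `(z̄, c̄)` by `2` gives an anchor `x₀` with every classification
margin at least `2`, completed by large enough universum slacks. If an optimal point `x` had total
slack `S = ∑ ξᵢ > 0`, the convex combination `(1 - t) x + t x₀` with `t = S / (S + 1)` would have
every margin at least `1`, hence be feasible with `ξ = 0`. Convexity of the remaining cost `R` then
gives `R x + μ S ≤ (1 - t) R x + t R x₀`, which is impossible once `μ > R x₀`.
-/

open Matrix Set Finset

theorem Matrix.PosSemidef.convexOn_dotProduct_mulVec {n : Type*} [Fintype n]
    {A : Matrix n n ℝ} (hA : A.PosSemidef) : ConvexOn ℝ univ fun x => x ⬝ᵥ A *ᵥ x := by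
  refine ⟨convex_univ, fun x _ y _ a b ha hb hab => ?_⟩
  have hxy := hA.dotProduct_mulVec_nonneg (x - y)
  obtain rfl : b = 1 - a := by linarith
  simp only [star_trivial, smul_eq_mul, mulVec_add, mulVec_smul, mulVec_sub, dotProduct_add,
    add_dotProduct, dotProduct_smul, smul_dotProduct, dotProduct_sub, sub_dotProduct] at hxy ⊢
  linear_combination (a * (1 - a)) * hxy

theorem convexOn_sum_abs_mulVec {m n : Type*} [Fintype m] [Fintype n] (V : Matrix m n ℝ) :
    ConvexOn ℝ univ fun z => ∑ i, |(V *ᵥ z) i| := by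
  refine ⟨convex_univ, fun x _ y _ a b ha hb hab => ?_⟩
  simp only [mulVec_add, mulVec_smul, Pi.add_apply, Pi.smul_apply, smul_eq_mul, mul_sum,
    ← sum_add_distrib]
  refine sum_le_sum fun i _ => (abs_add_le _ _).trans_eq ?_
  rw [abs_mul, abs_mul, abs_of_nonneg ha, abs_of_nonneg hb]

theorem slack_eq_zero_of_penalty_optimal {E ι : Type*} [AddCommGroup E] [Module ℝ E] [Fintype ι]
    {C : Set E} {R : E → ℝ} (hR : ConvexOn ℝ C R) (hR₀ : ∀ x ∈ C, 0 ≤ R x)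
    (m : ι → E →ᵃ[ℝ] ℝ) {x₀ : E} (hx₀ : x₀ ∈ C) {δ : ℝ} (hδ : 0 < δ)
    (hm₀ : ∀ i, 1 + δ ≤ m i x₀) {μ : ℝ} (hμ : R x₀ < μ * δ)
    {x : E} {ξ : ι → ℝ} (hx : x ∈ C) (hξ : 0 ≤ ξ) (hm : ∀ i, 1 - ξ i ≤ m i x)
    (hmin : ∀ x' ∈ C, (∀ i, 1 ≤ m i x') → R x + μ * ∑ i, ξ i ≤ R x') : ξ = 0 := by
  set S := ∑ i, ξ i
  have hξS : ∀ i, ξ i ≤ S := fun i => single_le_sum (fun i _ => hξ i) (mem_univ i)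
  suffices hS : S = 0 by
    funext i
    exact (sum_eq_zero_iff_of_nonneg fun i _ => hξ i).1 hS i (mem_univ i)
  by_contra hS
  have hSpos : 0 < S := (sum_nonneg fun i _ => hξ i).lt_of_ne' hS
  set t := S / (S + δ)
  have ht : t * δ = S * (1 - t) := by
    linarith [div_mul_cancel₀ S (by positivity : S + δ ≠ 0)]
  have ht₀ : 0 < t := by positivity
  have ht₁ : t < 1 := (div_lt_one (by positivity)).2 (by linarith)
  have hmix : (1 - t) • x + t • x₀ ∈ C := hR.1 hx hx₀ (by linarith) ht₀.le (by ring)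
  have hmargin : ∀ i, 1 ≤ m i ((1 - t) • x + t • x₀) := fun i => by
    rw [Convex.combo_affine_apply (by ring), smul_eq_mul, smul_eq_mul]
    nlinarith [hm i, hm₀ i, hξS i, mul_nonneg (sub_nonneg.2 ht₁.le) (sub_nonneg.2 (hξS i))]
  have hconv : R ((1 - t) • x + t • x₀) ≤ (1 - t) * R x + t * R x₀ :=
    hR.2 hx hx₀ (by linarith) ht₀.le (by ring)
  have hμ₀ : 0 < μ := pos_of_mul_pos_left ((hR₀ x₀ hx₀).trans_lt hμ) hδ.le
  nlinarith [hmin _ hmix hmargin, hR₀ x hx, mul_lt_mul_of_pos_left hμ ht₀, mul_pos hμ₀ hSpos]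

section SVM

variable {n κ : Type*} [Fintype n]

def signedMargin (y : ℝ) (w : n → ℝ) : (n → ℝ) × ℝ × (κ → ℝ) →ₗ[ℝ] ℝ where
  toFun x := y * (x.1 ⬝ᵥ w + x.2.1)
  map_add' x x' := by simp only [Prod.fst_add, Prod.snd_add, add_dotProduct]; ring
  map_smul' a x := by
    simp only [Prod.smul_fst, Prod.smul_snd, smul_dotProduct, smul_eq_mul, RingHom.id_apply]; ring

/-- Points are `(z, c, ψ)`: the program's variables with the classification slacks `ξ` split off. -/
def universumFeasibleSet (yu : κ → ℝ) (ru : κ → n → ℝ) (eps : ℝ) :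
    Set ((n → ℝ) × ℝ × (κ → ℝ)) :=
  {x | (∀ j, -eps - x.2.2 j ≤ yu j * (x.1 ⬝ᵥ ru j + x.2.1)) ∧ ∀ j, 0 ≤ x.2.2 j}

theorem convex_universumFeasibleSet (yu : κ → ℝ) (ru : κ → n → ℝ) (eps : ℝ) :
    Convex ℝ (universumFeasibleSet yu ru eps) := by
  rintro x ⟨hx, hx₀⟩ x' ⟨hx', hx'₀⟩ a b ha hb hab
  refine ⟨fun j => ?_, fun j => ?_⟩ <;>
    simp only [Prod.fst_add, Prod.snd_add, Prod.smul_fst, Prod.smul_snd, add_dotProduct,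
      smul_dotProduct, Pi.add_apply, Pi.smul_apply, smul_eq_mul]
  · linear_combination a * hx j + b * hx' j + eps * hab
  · nlinarith [hx₀ j, hx'₀ j]

theorem exists_mem_universumFeasibleSet (yu : κ → ℝ) (ru : κ → n → ℝ) (eps : ℝ) (z : n → ℝ)
    (c : ℝ) : ∃ ψ, (z, c, ψ) ∈ universumFeasibleSet yu ru eps :=
  ⟨fun j => max 0 (-eps - yu j * (z ⬝ᵥ ru j + c)),
    fun j => by linarith [le_max_right 0 (-eps - yu j * (z ⬝ᵥ ru j + c))],
    fun j => le_max_left _ _⟩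

variable {m : Type*} [Fintype m] [Fintype κ]

noncomputable def svmRegularizer (G : Matrix n n ℝ) (V : Matrix m n ℝ) (lam Cu : ℝ)
    (x : (n → ℝ) × ℝ × (κ → ℝ)) : ℝ :=
  (1/2) * (x.1 ⬝ᵥ G *ᵥ x.1) + lam * ∑ i, |(V *ᵥ x.1) i| + Cu * ∑ j, x.2.2 j

theorem convexOn_svmRegularizer {G : Matrix n n ℝ} (hG : G.PosSemidef) (V : Matrix m n ℝ)
    {lam : ℝ} (hlam : 0 ≤ lam) (Cu : ℝ) :
    ConvexOn ℝ univ (svmRegularizer (κ := κ) G V lam Cu) := by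
  refine ⟨convex_univ, fun x _ x' _ a b ha hb hab => ?_⟩
  have hquad := hG.convexOn_dotProduct_mulVec.2 (mem_univ x.1) (mem_univ x'.1) ha hb hab
  have hl1 := (convexOn_sum_abs_mulVec V).2 (mem_univ x.1) (mem_univ x'.1) ha hb hab
  simp only [smul_eq_mul] at hquad hl1
  simp only [svmRegularizer, Prod.fst_add, Prod.snd_add, Prod.smul_fst, Prod.smul_snd,
    Pi.add_apply, Pi.smul_apply, smul_eq_mul, sum_add_distrib, ← mul_sum]
  nlinarith [mul_le_mul_of_nonneg_left hl1 hlam]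

theorem svmRegularizer_nonneg {G : Matrix n n ℝ} (hG : G.PosSemidef) (V : Matrix m n ℝ)
    {lam Cu : ℝ} (hlam : 0 ≤ lam) (hCu : 0 ≤ Cu) {x : (n → ℝ) × ℝ × (κ → ℝ)}
    (hψ : ∀ j, 0 ≤ x.2.2 j) : 0 ≤ svmRegularizer G V lam Cu x := by
  have hquad : 0 ≤ x.1 ⬝ᵥ G *ᵥ x.1 := by simpa using hG.dotProduct_mulVec_nonneg x.1
  have hl1 : 0 ≤ ∑ i, |(V *ᵥ x.1) i| := sum_nonneg fun i _ => abs_nonneg _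
  have hψsum : 0 ≤ ∑ j, x.2.2 j := sum_nonneg fun j _ => hψ j
  unfold svmRegularizer
  positivity

end SVM

theorem vanishing_margin_general (d m r k : ℕ)
    (G : Matrix (Fin d) (Fin d) ℝ) (hG : G.PosDef)
    (V : Matrix (Fin k) (Fin d) ℝ)
    (rv : Fin m → Fin d → ℝ) (ru : Fin (2 * r) → Fin d → ℝ)
    (y : Fin m → ℝ)
    (yu : Fin (2 * r) → ℝ)
    (lam Cu eps : ℝ) (hlam : 0 < lam) (hCu : 0 < Cu)
    (hsep : ∃ (zb : Fin d → ℝ) (cb : ℝ), ∀ i, y i * (zb ⬝ᵥ rv i + cb) ≥ 1) :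
    ∃ mubar : ℝ, 0 < mubar ∧ ∀ mu : ℝ, mubar < mu →
      let obj : (Fin d → ℝ) × ℝ × (Fin m → ℝ) × (Fin (2 * r) → ℝ) → ℝ := fun p =>
        (1/2) * (p.1 ⬝ᵥ G.mulVec p.1) + lam * ∑ i, |V.mulVec p.1 i|
          + mu * ∑ i, p.2.2.1 i + Cu * ∑ j, p.2.2.2 j
      let feas : (Fin d → ℝ) × ℝ × (Fin m → ℝ) × (Fin (2 * r) → ℝ) → Prop := fun p =>
        (∀ i, y i * (p.1 ⬝ᵥ rv i + p.2.1) ≥ 1 - p.2.2.1 i) ∧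
        (∀ j, yu j * (p.1 ⬝ᵥ ru j + p.2.1) ≥ -eps - p.2.2.2 j) ∧
        (∀ i, 0 ≤ p.2.2.1 i) ∧ (∀ j, 0 ≤ p.2.2.2 j)
      ∀ p, feas p → (∀ q, feas q → obj p ≤ obj q) → p.2.2.1 = 0 := by
  obtain ⟨zb, cb, hzb⟩ := hsep
  obtain ⟨ψ₀, hx₀⟩ := exists_mem_universumFeasibleSet yu ru eps ((2 : ℝ) • zb) (2 * cb)
  set C := universumFeasibleSet yu ru eps
  set R := svmRegularizer (κ := Fin (2 * r)) G V lam Cu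
  have hR₀ : ∀ x ∈ C, 0 ≤ R x := fun x hx =>
    svmRegularizer_nonneg hG.posSemidef V hlam.le hCu.le hx.2
  refine ⟨R ((2 : ℝ) • zb, 2 * cb, ψ₀) + 1, by linarith [hR₀ _ hx₀], ?_⟩
  intro mu hmu obj feas p ⟨hξ, hψ, hξ₀, hψ₀⟩ hopt
  refine slack_eq_zero_of_penalty_optimal
    ((convexOn_svmRegularizer hG.posSemidef V hlam.le Cu).subset (subset_univ C)
      (convex_universumFeasibleSet yu ru eps))
    hR₀ (fun i => (signedMargin (y i) (rv i)).toAffineMap) hx₀ one_pos (fun i => ?_)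
    (μ := mu) (by linarith) (x := (p.1, p.2.1, p.2.2.2)) ⟨hψ, hψ₀⟩ hξ₀ hξ
    (fun x' hx' hm' => ?_)
  · show 1 + 1 ≤ y i * ((2 : ℝ) • zb ⬝ᵥ rv i + 2 * cb)
    rw [smul_dotProduct, smul_eq_mul]
    linarith [hzb i]
  · have := hopt (x'.1, x'.2.1, 0, x'.2.2)
      ⟨fun i => (sub_zero _).trans_le (hm' i), hx'.1, fun _ => le_rfl, hx'.2⟩
    simp only [obj, svmRegularizer, Pi.zero_apply, sum_const_zero, mul_zero] at this ⊢
    linarith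

/-- Vanishing margin: if the data is quadratically separable, then for every `λ > 0`
there is a threshold `μ̄ > 0` such that for all `μ > μ̄`, every optimal solution of the
L1-regularized Universum quadratic-surface SVM program has `ξ* = 0`. -/
theorem vanishing_margin (d m r k : ℕ)
    (G : Matrix (Fin d) (Fin d) ℝ) (hG : G.PosDef)
    (V : Matrix (Fin k) (Fin d) ℝ)
    (rv : Fin m → Fin d → ℝ) (ru : Fin (2 * r) → Fin d → ℝ)
    (y : Fin m → ℝ) (hy : ∀ i, y i = 1 ∨ y i = -1)
    (yu : Fin (2 * r) → ℝ) (hyu : ∀ j, yu j = 1 ∨ yu j = -1)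
    (lam Cu eps : ℝ) (hlam : 0 < lam) (hCu : 0 < Cu) (heps : 0 ≤ eps)
    (hsep : ∃ (zb : Fin d → ℝ) (cb : ℝ), ∀ i, y i * (zb ⬝ᵥ rv i + cb) ≥ 1) :
    ∃ mubar : ℝ, 0 < mubar ∧ ∀ mu : ℝ, mubar < mu →
      let obj : (Fin d → ℝ) × ℝ × (Fin m → ℝ) × (Fin (2 * r) → ℝ) → ℝ := fun p =>
        (1/2) * (p.1 ⬝ᵥ G.mulVec p.1) + lam * ∑ i, |V.mulVec p.1 i|
          + mu * ∑ i, p.2.2.1 i + Cu * ∑ j, p.2.2.2 j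
      let feas : (Fin d → ℝ) × ℝ × (Fin m → ℝ) × (Fin (2 * r) → ℝ) → Prop := fun p =>
        (∀ i, y i * (p.1 ⬝ᵥ rv i + p.2.1) ≥ 1 - p.2.2.1 i) ∧
        (∀ j, yu j * (p.1 ⬝ᵥ ru j + p.2.1) ≥ -eps - p.2.2.2 j) ∧
        (∀ i, 0 ≤ p.2.2.1 i) ∧ (∀ j, 0 ≤ p.2.2.2 j)
      ∀ p, feas p → (∀ q, feas q → obj p ≤ obj q) → p.2.2.1 = 0 :=
  vanishing_margin_general d m r k G hG V rv ru y yu lam Cu eps hlam hCu hsep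
end
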